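/- arXiv:1808.04523 — 5 statements merged into one kernel-verified Lean document; each statement's English description precedes it below -/
import Mathlib

section
/- Let f:[0,1]→ℝ be convex, let [t₁,t₂]⊆[0,1] with t₁<t₂, and let x,z ∈ (t₁,t₂). Then Sec[f,[t₁,t₂]](x) − f(x) ≥ (Sec[f,[t₁,t₂]](z) − f(z)) · min{(t₂−x)/(t₂−z), (x−t₁)/(z−t₁)}. -/
noncomputable def Sec (f : ℝ → ℝ) (a b x : ℝ) : ℝ :=
  ((b - x) / (b - a)) * f a + ((x - a) / (b - a)) * f b

/-!
The gap `y ↦ Sec f t₁ t₂ y - f y` is concave on `[t₁, t₂]` (affine minus convex) and vanishes at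
both endpoints, hence is nonnegative. A concave function that is nonnegative at `p` lies above its
chord from `p` to `z`, so at `x` between `p` and `z` it is at least `(x - p) / (z - p)` times its
value at `z`; take `p = t₁` if `x ≤ z` and `p = t₂` otherwise.
-/

open Set

section Secant

variable (f : ℝ → ℝ) {a b : ℝ}

theorem Sec_left (hab : a ≠ b) : Sec f a b a = f a := by
  have : b - a ≠ 0 := sub_ne_zero.2 hab.symm
  simp [Sec, div_self this]

theorem Sec_right (hab : a ≠ b) : Sec f a b b = f b := by
  have : b - a ≠ 0 := sub_ne_zero.2 hab.symm
  simp [Sec, div_self this]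

theorem concaveOn_Sec {s : Set ℝ} (hs : Convex ℝ s) : ConcaveOn ℝ s (Sec f a b) := by
  refine ⟨hs, fun x _ y _ μ ν _ _ hμν => le_of_eq ?_⟩
  simp only [Sec, smul_eq_mul]
  linear_combination (b * f a - a * f b) / (b - a) * hμν

end Secant

theorem ConcaveOn.div_mul_le_of_mem_uIcc {s : Set ℝ} {g : ℝ → ℝ} (hg : ConcaveOn ℝ s g)
    {p z x : ℝ} (hp : p ∈ s) (hz : z ∈ s) (hgp : 0 ≤ g p) (hx : x ∈ uIcc p z) :
    (x - p) / (z - p) * g z ≤ g x := by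
  rw [← segment_eq_uIcc] at hx
  obtain ⟨μ, ν, hμ, hν, hμν, rfl⟩ := hx
  rcases eq_or_ne z p with rfl | hzp
  · rw [← add_smul, hμν, one_smul, sub_self, zero_div, zero_mul]
    exact hgp
  have hratio : (μ • p + ν • z - p) / (z - p) = ν := by
    rw [div_eq_iff (sub_ne_zero.2 hzp), smul_eq_mul, smul_eq_mul]
    linear_combination p * hμν
  calc (μ • p + ν • z - p) / (z - p) * g z = ν * g z := by rw [hratio]
    _ ≤ μ • g p + ν • g z := le_add_of_nonneg_left (smul_nonneg hμ hgp)
    _ ≤ g (μ • p + ν • z) := hg.2 hp hz hμ hν hμν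

theorem secant_gap_comparison_general (f : ℝ → ℝ)
    (hf : ConvexOn ℝ (Set.Icc (0:ℝ) 1) f)
    (t₁ t₂ : ℝ) (h0 : 0 ≤ t₁) (h1 : t₂ ≤ 1)
    (x z : ℝ) (hx : x ∈ Set.Ioo t₁ t₂) (hz : z ∈ Set.Ioo t₁ t₂) :
    Sec f t₁ t₂ x - f x ≥
      (Sec f t₁ t₂ z - f z) * min ((t₂ - x) / (t₂ - z)) ((x - t₁) / (z - t₁)) := by
  set g := fun y => Sec f t₁ t₂ y - f y with hg_def
  have h12 : t₁ < t₂ := hx.1.trans hx.2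
  have hg : ConcaveOn ℝ (Icc t₁ t₂) g :=
    (concaveOn_Sec f (convex_Icc t₁ t₂)).sub (hf.subset (Icc_subset_Icc h0 h1) (convex_Icc t₁ t₂))
  have hg₁ : g t₁ = 0 := by simp [hg_def, Sec_left f h12.ne]
  have hg₂ : g t₂ = 0 := by simp [hg_def, Sec_right f h12.ne]
  have ht₁ : t₁ ∈ Icc t₁ t₂ := left_mem_Icc.2 h12.le
  have ht₂ : t₂ ∈ Icc t₁ t₂ := right_mem_Icc.2 h12.le
  have hz' : z ∈ Icc t₁ t₂ := Ioo_subset_Icc_self hz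
  have hgz : 0 ≤ g z := by simpa [hg₁, hg₂] using hg.min_le_of_mem_Icc ht₁ ht₂ hz'
  show g z * _ ≤ g x
  rcases le_total x z with hxz | hzx
  · calc g z * min ((t₂ - x) / (t₂ - z)) ((x - t₁) / (z - t₁))
        ≤ (x - t₁) / (z - t₁) * g z := by rw [mul_comm]; gcongr; exact min_le_right _ _
      _ ≤ g x := hg.div_mul_le_of_mem_uIcc ht₁ hz' hg₁.ge
          (mem_uIcc.2 (.inl ⟨hx.1.le, hxz⟩))
  · calc g z * min ((t₂ - x) / (t₂ - z)) ((x - t₁) / (z - t₁))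
        ≤ (x - t₂) / (z - t₂) * g z := by
          rw [mul_comm, ← neg_sub t₂ x, ← neg_sub t₂ z, neg_div_neg_eq]
          gcongr
          exact min_le_left _ _
      _ ≤ g x := hg.div_mul_le_of_mem_uIcc ht₂ hz' hg₂.ge
          (mem_uIcc.2 (.inr ⟨hzx, hx.2.le⟩))

theorem secant_gap_comparison (f : ℝ → ℝ)
    (hf : ConvexOn ℝ (Set.Icc (0:ℝ) 1) f)
    (t₁ t₂ : ℝ) (h0 : 0 ≤ t₁) (h12 : t₁ < t₂) (h1 : t₂ ≤ 1)
    (x z : ℝ) (hx : x ∈ Set.Ioo t₁ t₂) (hz : z ∈ Set.Ioo t₁ t₂) :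
    Sec f t₁ t₂ x - f x ≥
      (Sec f t₁ t₂ z - f z) * min ((t₂ - x) / (t₂ - z)) ((x - t₁) / (z - t₁)) :=
  secant_gap_comparison_general f hf t₁ t₂ h0 h1 x z hx hz
end

section
/- Let f:[0,1]→ℝ be convex and differentiable, and fix x∈[0,1]. Then the function t ↦ Δ(f,x+t,t) := (f(x)+f(x+2t))/2 − f(x+t) is non-decreasing on {t ≥ 0 : x+2t ≤ 1}. -/
theorem ConvexOn.slope_le_slope_of_le {𝕜 : Type*} [Field 𝕜] [LinearOrder 𝕜]
    [IsStrictOrderedRing 𝕜] {s : Set 𝕜} {f : 𝕜 → 𝕜} (hf : ConvexOn 𝕜 s f) {a b c d : 𝕜}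
    (ha : a ∈ s) (hb : b ∈ s) (hc : c ∈ s) (hd : d ∈ s)
    (hab : a < b) (hcd : c < d) (hac : a ≤ c) (hbd : b ≤ d) :
    slope f a b ≤ slope f c d :=
  calc slope f a b
      ≤ slope f a d := hf.slope_mono ha ⟨hb, hab.ne'⟩ ⟨hd, (hab.trans_le hbd).ne'⟩ hbd
    _ = slope f d a := slope_comm f a d
    _ ≤ slope f d c := hf.slope_mono hd ⟨ha, (hab.trans_le hbd).ne⟩ ⟨hc, hcd.ne⟩ hac
    _ = slope f c d := slope_comm f d c

theorem delta_monotone_left_endpoint_fixed_general (f : ℝ → ℝ)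
    (hf : ConvexOn ℝ (Set.Icc (0:ℝ) 1) f)
    (x : ℝ) (hx : x ∈ Set.Icc (0:ℝ) 1) :
    ∀ s t : ℝ, 0 ≤ s → s ≤ t → x + 2 * t ≤ 1 →
      (f x + f (x + 2 * s)) / 2 - f (x + s) ≤
        (f x + f (x + 2 * t)) / 2 - f (x + t) := by
  intro s t hs hst ht
  rcases hst.eq_or_lt with rfl | hst
  · rfl
  have mem : ∀ u, 0 ≤ u → u ≤ 2 * t → x + u ∈ Set.Icc (0:ℝ) 1 := fun u hu hut ↦
    ⟨by linarith [hx.1], by linarith⟩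
  -- the increment over `[x + s, x + t]` is at most half the increment over `[x + 2s, x + 2t]`
  have key := hf.slope_le_slope_of_le (mem s hs (by linarith)) (mem t (by linarith) (by linarith))
    (mem (2 * s) (by linarith) (by linarith)) (mem (2 * t) (by linarith) le_rfl)
    (by linarith) (by linarith) (by linarith) (by linarith)
  rw [slope_def_field, slope_def_field, show x + t - (x + s) = t - s by ring,
    show x + 2 * t - (x + 2 * s) = 2 * (t - s) by ring, ← div_div,
    div_le_div_iff_of_pos_right (by linarith)] at key
  linarith

theorem delta_monotone_left_endpoint_fixed (f : ℝ → ℝ)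
    (hf : ConvexOn ℝ (Set.Icc (0:ℝ) 1) f)
    (hdiff : DifferentiableOn ℝ f (Set.Icc (0:ℝ) 1))
    (x : ℝ) (hx : x ∈ Set.Icc (0:ℝ) 1) :
    ∀ s t : ℝ, 0 ≤ s → s ≤ t → x + 2 * t ≤ 1 →
      (f x + f (x + 2 * s)) / 2 - f (x + s) ≤
        (f x + f (x + 2 * t)) / 2 - f (x + t) :=
  delta_monotone_left_endpoint_fixed_general f hf x hx
end

section
/- Let f:[0,1]→ℝ be convex, and suppose [x−t,x+t]⊆[0,1] with t>0 and Δ(f,x,t) := (f(x−t)+f(x+t))/2 − f(x) ≥ ε > 0. Then for every τ with |τ| ≤ t and [x+τ−(t+|τ|), x+τ+(t+|τ|)] ⊆ [0,1], it holds that Δ(f, x+τ, t+|τ|) ≥ ε·(1 − |τ|/t). -/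
/-! Extending the interval `[x - t, x + t]` on one side by `2τ` while keeping the other endpoint
does not decrease the midpoint secant error of a convex function: the loss in `f(x + τ) - f x` is
compensated because increments of a convex function over a fixed step grow to the right. The
window `[x + τ - (t + |τ|), x + τ + (t + |τ|)]` is such an extension, so
`Δ(f, x + τ, t + |τ|) ≥ Δ(f, x, t) ≥ ε ≥ ε (1 - |τ| / t)`. -/

noncomputable def Δ (f : ℝ → ℝ) (x t : ℝ) : ℝ := (f (x - t) + f (x + t)) / 2 - f x

section Slope

variable {𝕜 : Type*} [Field 𝕜] [LinearOrder 𝕜] [IsStrictOrderedRing 𝕜] {s : Set 𝕜} {f : 𝕜 → 𝕜}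

theorem ConvexOn.slope_le_slope_of_le_of_le (hf : ConvexOn 𝕜 s f) {a b c d : 𝕜}
    (ha : a ∈ s) (hb : b ∈ s) (hc : c ∈ s) (hd : d ∈ s)
    (hab : a < b) (hcd : c < d) (hac : a ≤ c) (hbd : b ≤ d) :
    slope f a b ≤ slope f c d :=
  have had : a < d := hab.trans_le hbd
  calc slope f a b ≤ slope f a d := hf.slope_mono ha ⟨hb, hab.ne'⟩ ⟨hd, had.ne'⟩ hbd
    _ = slope f d a := slope_comm f a d
    _ ≤ slope f d c := hf.slope_mono hd ⟨ha, had.ne⟩ ⟨hc, hcd.ne⟩ hac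
    _ = slope f c d := slope_comm f d c

theorem ConvexOn.apply_add_sub_apply_le_of_le (hf : ConvexOn 𝕜 s f) {a b h : 𝕜}
    (ha : a ∈ s) (hbh : b + h ∈ s) (hh : 0 ≤ h) (hab : a ≤ b) :
    f (a + h) - f a ≤ f (b + h) - f b := by
  rcases hh.eq_or_lt with rfl | hh
  · simp
  have mem : ∀ y, a ≤ y → y ≤ b + h → y ∈ s := fun y hay hyb =>
    hf.1.ordConnected.out ha hbh ⟨hay, hyb⟩
  have hslope := hf.slope_le_slope_of_le_of_le ha (mem (a + h) (by linarith) (by linarith))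
    (mem b hab (by linarith)) hbh (by linarith) (by linarith) hab (by linarith)
  simp only [slope_def_field, add_sub_cancel_left] at hslope
  exact (div_le_div_iff_of_pos_right hh).1 hslope

end Slope

theorem Δ_comp_neg (f : ℝ → ℝ) (x t : ℝ) : Δ (fun y => f (-y)) (-x) t = Δ f x t := by
  simp only [Δ, neg_neg, neg_sub', neg_add', sub_neg_eq_add]
  ring

theorem ConvexOn.Δ_le_Δ_extend_right {s : Set ℝ} {f : ℝ → ℝ} (hf : ConvexOn ℝ s f)
    {x t τ : ℝ} (ht : 0 ≤ t) (hτ : 0 ≤ τ) (hl : x - t ∈ s) (hr : x + t + 2 * τ ∈ s) :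
    Δ f x t ≤ Δ f (x + τ) (t + τ) := by
  have mem : ∀ y, x - t ≤ y → y ≤ x + t + 2 * τ → y ∈ s := fun y hly hyr =>
    hf.1.ordConnected.out hl hr ⟨hly, hyr⟩
  have h₁ := hf.apply_add_sub_apply_le_of_le (mem x (by linarith) (by linarith))
    (b := x + t) (h := τ) (mem _ (by linarith) (by linarith)) hτ (by linarith)
  have h₂ := hf.apply_add_sub_apply_le_of_le (mem x (by linarith) (by linarith))
    (b := x + t + τ) (h := τ) (by convert hr using 1; ring) hτ (by linarith)
  -- `2 (f (x + τ) - f x) ≤ f (x + t + 2τ) - f (x + t)`, split at `x + t + τ`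
  simp only [Δ]
  rw [show x + τ - (t + τ) = x - t by ring, show x + τ + (t + τ) = x + t + τ + τ by ring]
  linarith

theorem ConvexOn.Δ_le_Δ_shift {s : Set ℝ} {f : ℝ → ℝ} (hf : ConvexOn ℝ s f)
    {x t τ : ℝ} (ht : 0 ≤ t) (hl : x + τ - (t + |τ|) ∈ s) (hr : x + τ + (t + |τ|) ∈ s) :
    Δ f x t ≤ Δ f (x + τ) (t + |τ|) := by
  rcases le_total 0 τ with hτ | hτ
  · rw [abs_of_nonneg hτ] at hl hr ⊢
    exact hf.Δ_le_Δ_extend_right ht hτ (by convert hl using 1; ring) (by convert hr using 1; ring)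
  · rw [abs_of_nonpos hτ] at hl hr ⊢
    -- reflect `y ↦ -y` to reduce to an extension to the right
    have hg : ConvexOn ℝ (-s) (fun y => f (-y)) := hf.comp_linearMap (-LinearMap.id)
    have := hg.Δ_le_Δ_extend_right (x := -x) ht (neg_nonneg.2 hτ)
      (by simp only [Set.mem_neg]; convert hr using 1; ring)
      (by simp only [Set.mem_neg]; convert hl using 1; ring)
    rwa [Δ_comp_neg, ← neg_add, Δ_comp_neg] at this

theorem delta_shifted_lower_bound_general (f : ℝ → ℝ)
    (hf : ConvexOn ℝ (Set.Icc (0:ℝ) 1) f)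
    (x t ε : ℝ) (ht : 0 < t)
    (hε : 0 < ε) (hΔ : ε ≤ Δ f x t) :
    ∀ τ : ℝ, |τ| ≤ t →
      Set.Icc (x + τ - (t + |τ|)) (x + τ + (t + |τ|)) ⊆ Set.Icc 0 1 →
      ε * (1 - |τ| / t) ≤ Δ f (x + τ) (t + |τ|) := by
  intro τ _ hsub
  have hrad : 0 ≤ t + |τ| := by positivity
  calc ε * (1 - |τ| / t) ≤ ε :=
        mul_le_of_le_one_right hε.le (sub_le_self _ (div_nonneg (abs_nonneg τ) ht.le))
    _ ≤ Δ f x t := hΔ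
    _ ≤ Δ f (x + τ) (t + |τ|) := hf.Δ_le_Δ_shift ht.le
        (hsub (Set.left_mem_Icc.2 (by linarith))) (hsub (Set.right_mem_Icc.2 (by linarith)))

theorem delta_shifted_lower_bound (f : ℝ → ℝ)
    (hf : ConvexOn ℝ (Set.Icc (0:ℝ) 1) f)
    (x t ε : ℝ) (ht : 0 < t) (hsub : Set.Icc (x - t) (x + t) ⊆ Set.Icc 0 1)
    (hε : 0 < ε) (hΔ : ε ≤ Δ f x t) :
    ∀ τ : ℝ, |τ| ≤ t →
      Set.Icc (x + τ - (t + |τ|)) (x + τ + (t + |τ|)) ⊆ Set.Icc 0 1 →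
      ε * (1 - |τ| / t) ≤ Δ f (x + τ) (t + |τ|) :=
  delta_shifted_lower_bound_general f hf x t ε ht hε hΔ
end

section
/- Let f, f⋆ : [0,1]→ℝ and let I=[a,b]⊆[0,1] with midpoint m. Suppose |f(a)−f⋆(a)| < ε, |f(b)−f⋆(b)| < ε, |f(m)−f⋆(m)| < ε, f and f⋆ are convex, and Δ(f⋆,I) ≤ ε. Then for every z∈I, |f(z)−f⋆(z)| < 9ε. -/
/-!
On the secant line through `(a, g a)` and `(b, g b)`, a convex `g` lies below the secant, and
its gap to the secant is at most twice the midpoint gap `Δ(g)`: the midpoint is a convex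
combination of `z` and the far endpoint, with weight at least `1/2` on `z`. So `f - f⋆` is
squeezed between the difference of the two secants (a convex combination of the errors at `a`
and `b`, hence smaller than `ε`) and the two midpoint gaps, where `Δ(f) < Δ(f⋆) + 2ε ≤ 3ε`.
-/

variable {E : Type*} [AddCommGroup E] [Module ℝ E]

noncomputable def midpointSecantError (g : E → ℝ) (a b : E) : ℝ :=
  (g a + g b) / 2 - g (midpoint ℝ a b)

theorem midpointSecantError_comm (g : E → ℝ) (a b : E) :
    midpointSecantError g a b = midpointSecantError g b a := by
  rw [midpointSecantError, midpointSecantError, add_comm (g a), midpoint_comm]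

namespace ConvexOn

variable {s : Set E} {g : E → ℝ} {a b : E}

theorem midpointSecantError_nonneg (hg : ConvexOn ℝ s g) (ha : a ∈ s) (hb : b ∈ s) :
    0 ≤ midpointSecantError g a b := by
  have h := hg.2 ha hb (by norm_num : (0:ℝ) ≤ 2⁻¹) (by norm_num : (0:ℝ) ≤ 2⁻¹) (by norm_num)
  rw [← smul_add, ← invOf_eq_inv, ← midpoint_eq_smul_add, smul_eq_mul, smul_eq_mul,
    invOf_eq_inv] at h
  rw [midpointSecantError]
  linarith

theorem secant_sub_le_of_half_le (hg : ConvexOn ℝ s g) (ha : a ∈ s) (hb : b ∈ s)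
    {p q : ℝ} (hp : 1 / 2 ≤ p) (hq : 0 ≤ q) (hpq : p + q = 1) :
    p * g a + q * g b - g (p • a + q • b) ≤ 2 * p * midpointSecantError g a b := by
  have hz : p • a + q • b ∈ s := hg.1 ha hb (by linarith) hq hpq
  obtain rfl : q = 1 - p := by linarith
  -- the midpoint lies on the segment from `p • a + (1 - p) • b` to `b`
  have hmid : (2 * p)⁻¹ • (p • a + (1 - p) • b) + (1 - (2 * p)⁻¹) • b = midpoint ℝ a b := by
    rw [midpoint_eq_smul_add, invOf_eq_inv]
    match_scalars <;> field_simp; ring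
  have h := hg.2 hz hb (by positivity : 0 ≤ (2 * p)⁻¹)
    (sub_nonneg.2 (inv_le_one_of_one_le₀ (by linarith))) (add_sub_cancel _ _)
  rw [hmid, smul_eq_mul, smul_eq_mul] at h
  have key : 2 * p * g (midpoint ℝ a b) ≤ g (p • a + (1 - p) • b) + (2 * p - 1) * g b := by
    have := mul_le_mul_of_nonneg_left h (by positivity : (0:ℝ) ≤ 2 * p)
    field_simp at this
    linarith
  rw [midpointSecantError]
  linarith

theorem secant_sub_le_two_mul_midpointSecantError (hg : ConvexOn ℝ s g) (ha : a ∈ s)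
    (hb : b ∈ s) {p q : ℝ} (hp : 0 ≤ p) (hq : 0 ≤ q) (hpq : p + q = 1) :
    p * g a + q * g b - g (p • a + q • b) ≤ 2 * midpointSecantError g a b := by
  have hΔ := hg.midpointSecantError_nonneg ha hb
  rcases le_total (1 / 2) p with hp' | hq'
  · have := hg.secant_sub_le_of_half_le ha hb hp' hq hpq
    nlinarith
  · have := hg.secant_sub_le_of_half_le hb ha (by linarith : 1 / 2 ≤ q) hp (by linarith)
    rw [midpointSecantError_comm, add_comm (q • b), add_comm (q * g b)] at this
    nlinarith

end ConvexOn

theorem three_point_agreement_uniform_closeness (f fstar : ℝ → ℝ)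
    (hf : ConvexOn ℝ (Set.Icc (0:ℝ) 1) f)
    (hfstar : ConvexOn ℝ (Set.Icc (0:ℝ) 1) fstar)
    (a b ε : ℝ) (h0 : 0 ≤ a) (hab : a < b) (h1 : b ≤ 1)
    (hA : |f a - fstar a| < ε) (hB : |f b - fstar b| < ε)
    (hM : |f ((a + b) / 2) - fstar ((a + b) / 2)| < ε)
    (hΔ : (fstar a + fstar b) / 2 - fstar ((a + b) / 2) ≤ ε) :
    ∀ z ∈ Set.Icc a b, |f z - fstar z| < 9 * ε := by
  intro z hz
  rw [← segment_eq_Icc hab.le] at hz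
  obtain ⟨p, q, hp, hq, hpq, rfl⟩ := hz
  have ha : a ∈ Set.Icc (0:ℝ) 1 := ⟨h0, by linarith⟩
  have hb : b ∈ Set.Icc (0:ℝ) 1 := ⟨by linarith, h1⟩
  have hsecant : |p * (f a - fstar a) + q * (f b - fstar b)| < ε := by
    simpa using convex_ball (0:ℝ) ε (mem_ball_zero_iff.2 hA) (mem_ball_zero_iff.2 hB) hp hq hpq
  have hf_below := hf.2 ha hb hp hq hpq
  have hfstar_below := hfstar.2 ha hb hp hq hpq
  have hf_gap := hf.secant_sub_le_two_mul_midpointSecantError ha hb hp hq hpq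
  have hfstar_gap := hfstar.secant_sub_le_two_mul_midpointSecantError ha hb hp hq hpq
  have hmid : midpoint ℝ a b = (a + b) / 2 := by
    rw [midpoint_eq_smul_add, smul_eq_mul, invOf_eq_inv, inv_mul_eq_div]
  simp only [midpointSecantError, hmid, smul_eq_mul] at *
  rw [abs_lt] at *
  constructor <;> linarith
end

section
/- Let f:[0,1]→ℝ be convex and suppose Δ(f, [u−s, u+s]) ≤ 2ε for some interval [u−s,u+s]⊆[0,1] obtained from [x−t,x+t] with Δ(f,[x−t,x+t]) = ε, where u = x+τ·t for τ∈[0,1] and s=(1−τ)t (so [u−s,u+s]⊆[x−t,x+t] sharing right endpoint x+t). Then Δ(f,[u−s,u+s]) ≤ 2·Δ(f,[x−t,x+t]). -/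
/-! The chord of a convex `f` over `I = [a, b]` lies above `f` on `I` and is affine, so for every
`[u - r, u + r] ⊆ I` the midpoint error `Δ f u r` is at most the gap `secant f a b u - f u`.
That gap is at most `2 Δ(f, I)` everywhere on `I`: a point `y` left of the midpoint `m` of `I`
sees `m` as a convex combination of `y` and `b` with weight at least `1/2` on `y` (symmetrically
on the right). -/

open Set

section Secant

variable {𝕜 : Type*} [Field 𝕜]

def secant (f : 𝕜 → 𝕜) (a b y : 𝕜) : 𝕜 := ((b - y) * f a + (y - a) * f b) / (b - a)

theorem secant_sub_add_secant_add (f : 𝕜 → 𝕜) (a b u r : 𝕜) :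
    secant f a b (u - r) + secant f a b (u + r) = 2 * secant f a b u := by
  unfold secant
  ring

variable [LinearOrder 𝕜] [IsStrictOrderedRing 𝕜] {s : Set 𝕜} {f : 𝕜 → 𝕜}

theorem ConvexOn.mul_le_of_le_of_le (hf : ConvexOn 𝕜 s f) {x y z : 𝕜} (hx : x ∈ s) (hz : z ∈ s)
    (hxy : x ≤ y) (hyz : y ≤ z) : (z - x) * f y ≤ (z - y) * f x + (y - x) * f z := by
  rcases hxy.eq_or_lt with rfl | hxy
  · simp
  rcases hyz.eq_or_lt with rfl | hyz
  · simp
  exact hf.secant_mono_aux1 hx hz hxy hyz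

theorem ConvexOn.le_secant (hf : ConvexOn 𝕜 s f) {a b y : 𝕜} (ha : a ∈ s) (hb : b ∈ s)
    (hab : a < b) (hy : y ∈ Icc a b) : f y ≤ secant f a b y := by
  rw [secant, le_div_iff₀ (sub_pos.2 hab), mul_comm]
  exact hf.mul_le_of_le_of_le ha hb hy.1 hy.2

end Secant

section Midpoint

variable {s : Set ℝ} {f : ℝ → ℝ}

theorem ConvexOn.secant_sub_le_two_mul_Δ (hf : ConvexOn ℝ s f) {x t y : ℝ} (ht : 0 < t)
    (ha : x - t ∈ s) (hb : x + t ∈ s) (hy : y ∈ Icc (x - t) (x + t)) :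
    secant f (x - t) (x + t) y - f y ≤ 2 * Δ f x t := by
  have hys : y ∈ s := hf.1.ordConnected.out ha hb hy
  obtain ⟨hay, hyb⟩ := hy
  have hmid := hf.mul_le_of_le_of_le ha hb (by linarith : x - t ≤ x) (by linarith)
  rw [secant, sub_le_iff_le_add, div_le_iff₀ (by linarith), Δ]
  rcases le_total y x with hyx | hxy
  · have hside := hf.mul_le_of_le_of_le hys hb hyx (by linarith)
    nlinarith [mul_le_mul_of_nonneg_left hmid (by linarith : 0 ≤ y - x + t)]
  · have hside := hf.mul_le_of_le_of_le ha hys (by linarith) hxy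
    nlinarith [mul_le_mul_of_nonneg_left hmid (by linarith : 0 ≤ x + t - y)]

theorem ConvexOn.Δ_le_two_mul_Δ_of_Icc_subset (hf : ConvexOn ℝ s f) {x t u r : ℝ} (ht : 0 < t)
    (hr : 0 ≤ r) (ha : x - t ∈ s) (hb : x + t ∈ s)
    (hsub : Icc (u - r) (u + r) ⊆ Icc (x - t) (x + t)) :
    Δ f u r ≤ 2 * Δ f x t := by
  have hab : x - t < x + t := by linarith
  have hleft := hf.le_secant ha hb hab (hsub (left_mem_Icc.2 (by linarith)))
  have hright := hf.le_secant ha hb hab (hsub (right_mem_Icc.2 (by linarith)))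
  have hu : u ∈ Icc (u - r) (u + r) := ⟨by linarith, by linarith⟩
  have hcenter := hf.secant_sub_le_two_mul_Δ ht ha hb (hsub hu)
  have := secant_sub_add_secant_add f (x - t) (x + t) u r
  unfold Δ at hcenter ⊢
  linarith

end Midpoint

theorem shared_endpoint_delta_comparison_general (f : ℝ → ℝ)
    (hf : ConvexOn ℝ (Set.Icc (0:ℝ) 1) f)
    (x t τ : ℝ) (ht : 0 < t)
    (hsub : Set.Icc (x - t) (x + t) ⊆ Set.Icc 0 1)
    (hτ : τ ∈ Set.Icc (0:ℝ) 1) :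
    Δ f (x + τ * t) ((1 - τ) * t) ≤ 2 * Δ f x t := by
  obtain ⟨hτ0, hτ1⟩ := hτ
  have hτt : 0 ≤ τ * t := mul_nonneg hτ0 ht.le
  refine hf.Δ_le_two_mul_Δ_of_Icc_subset ht (mul_nonneg (sub_nonneg.2 hτ1) ht.le)
    (hsub (left_mem_Icc.2 (by linarith))) (hsub (right_mem_Icc.2 (by linarith)))
    (Icc_subset_Icc ?_ ?_) <;> linarith

theorem shared_endpoint_delta_comparison (f : ℝ → ℝ)
    (hf : ConvexOn ℝ (Set.Icc (0:ℝ) 1) f)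
    (x t ε τ : ℝ) (ht : 0 < t)
    (hsub : Set.Icc (x - t) (x + t) ⊆ Set.Icc 0 1)
    (hτ : τ ∈ Set.Icc (0:ℝ) 1)
    (hΔ : Δ f x t = ε) :
    Δ f (x + τ * t) ((1 - τ) * t) ≤ 2 * Δ f x t :=
  shared_endpoint_delta_comparison_general f hf x t τ ht hsub hτ
end
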